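/- arXiv:2411.02764 — 2 statements merged into one kernel-verified Lean document; each statement's English description precedes it below -/
import Mathlib

section
/- Let Y = X + E be symmetric n×n real matrices, and let v be a unit eigenvector of Y whose eigenvalue λ satisfies |λ| = ‖Y‖_op > 5α, where ‖X‖_op ≤ α. Let Q ⊆ {1,…,n} be a set containing the support of all nonzero rows and columns of E, and let ṽ be v with all coordinates outside Q zeroed out. Then ‖ṽ‖₂² ≥ 1 − 2α/‖E‖_op ≥ 1/2. -/
/-!
Since `E` vanishes outside `Q × Q`, its quadratic form takes the same value at `v` and at the
truncation `ṽ`, so `|⟪v, E v⟫| ≤ ‖E‖ ‖ṽ‖²`. On the other hand `⟪v, E v⟫ = λ - ⟪v, X v⟫` has absolute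
value at least `‖Y‖ - ‖X‖ ≥ ‖E‖ - 2α`, and `‖E‖ ≥ ‖Y‖ - ‖X‖ > 4α` makes the bound at least `1/2`.
-/

open scoped RealInnerProductSpace

section OperatorBounds

variable {F : Type*} [NormedAddCommGroup F] [InnerProductSpace ℝ F]

theorem abs_inner_self_apply_le (T : F →L[ℝ] F) (x : F) : |⟪x, T x⟫| ≤ ‖T‖ * ‖x‖ ^ 2 :=
  calc |⟪x, T x⟫| ≤ ‖x‖ * ‖T x‖ := abs_real_inner_le_norm _ _
    _ ≤ ‖x‖ * (‖T‖ * ‖x‖) := by gcongr; exact T.le_opNorm x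
    _ = ‖T‖ * ‖x‖ ^ 2 := by ring

theorem inner_self_apply_of_eigenvector {T : F →L[ℝ] F} {v : F} {lam : ℝ} (hv : ‖v‖ = 1)
    (heig : T v = lam • v) : ⟪v, T v⟫ = lam := by
  rw [heig, real_inner_smul_right, real_inner_self_eq_norm_sq, hv, one_pow, mul_one]

theorem sub_opNorm_le_abs_inner_of_top_eigenvector {S T : F →L[ℝ] F} {v : F} {lam : ℝ}
    (hv : ‖v‖ = 1) (heig : (S + T) v = lam • v) (hlam : |lam| = ‖S + T‖) :
    ‖S + T‖ - ‖S‖ ≤ |⟪v, T v⟫| := by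
  have hsplit : ⟪v, T v⟫ = lam - ⟪v, S v⟫ := by
    rw [← inner_self_apply_of_eigenvector hv heig, add_apply, inner_add_right]
    ring
  have hS : |⟪v, S v⟫| ≤ ‖S‖ := by simpa [hv] using abs_inner_self_apply_le S v
  rw [hsplit, ← hlam]
  linarith [abs_sub_abs_le_abs_sub lam ⟪v, S v⟫]

end OperatorBounds

open Matrix

theorem Matrix.dotProduct_mulVec_eq_of_eqOn {ι R : Type*} [Fintype ι]
    [NonUnitalNonAssocSemiring R] {A : Matrix ι ι R} {Q : Set ι}
    (hA : ∀ i j, A i j ≠ 0 → i ∈ Q ∧ j ∈ Q) {v w : ι → R} (hvw : Set.EqOn v w Q) :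
    v ⬝ᵥ A *ᵥ v = w ⬝ᵥ A *ᵥ w := by
  simp only [dotProduct, mulVec, Finset.mul_sum]
  refine Finset.sum_congr rfl fun i _ => Finset.sum_congr rfl fun j _ => ?_
  by_cases h : A i j = 0
  · simp [h]
  · obtain ⟨hi, hj⟩ := hA i j h
    rw [hvw hi, hvw hj]

theorem top_eigenvector_mass_on_corruption_general (n : ℕ) (X E Y : Matrix (Fin n) (Fin n) ℝ)
    (hY : Y = X + E)
    (α : ℝ) (hX : ‖Matrix.toEuclideanCLM (𝕜 := ℝ) X‖ ≤ α)
    (v : EuclideanSpace ℝ (Fin n)) (hv : ‖v‖ = 1) (lam : ℝ)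
    (heig : Matrix.toEuclideanCLM (𝕜 := ℝ) Y v = lam • v)
    (hlam : |lam| = ‖Matrix.toEuclideanCLM (𝕜 := ℝ) Y‖)
    (hbig : ‖Matrix.toEuclideanCLM (𝕜 := ℝ) Y‖ > 5 * α)
    (Q : Finset (Fin n)) (hQ : ∀ i j : Fin n, E i j ≠ 0 → i ∈ Q ∧ j ∈ Q)
    (vtil : EuclideanSpace ℝ (Fin n)) (hvtil : ∀ i, vtil i = if i ∈ Q then v i else 0) :
    1 - 2 * α / ‖Matrix.toEuclideanCLM (𝕜 := ℝ) E‖ ≤ ‖vtil‖ ^ 2 ∧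
    (1 : ℝ) / 2 ≤ 1 - 2 * α / ‖Matrix.toEuclideanCLM (𝕜 := ℝ) E‖ := by
  set TX := toEuclideanCLM (𝕜 := ℝ) X
  set TE := toEuclideanCLM (𝕜 := ℝ) E
  rw [hY, map_add] at heig hlam hbig
  have hmass : ‖TX + TE‖ - ‖TX‖ ≤ ‖TE‖ * ‖vtil‖ ^ 2 :=
    calc ‖TX + TE‖ - ‖TX‖ ≤ |⟪v, TE v⟫| := sub_opNorm_le_abs_inner_of_top_eigenvector hv heig hlam
      _ = |⟪vtil, TE vtil⟫| := by
        rw [inner_toEuclideanCLM, inner_toEuclideanCLM,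
          dotProduct_mulVec_eq_of_eqOn (Q := Q) (w := vtil.ofLp) hQ
            fun i hi => by simp [hvtil, Finset.mem_coe.mp hi]]
      _ ≤ ‖TE‖ * ‖vtil‖ ^ 2 := abs_inner_self_apply_le TE vtil
  have hE_lower : ‖TX + TE‖ - ‖TX‖ ≤ ‖TE‖ := by linarith [norm_add_le TX TE]
  have hE_upper : ‖TE‖ ≤ ‖TX + TE‖ + ‖TX‖ := by
    simpa only [add_sub_cancel_left] using norm_sub_le (TX + TE) TX
  have hα : 0 ≤ α := (norm_nonneg TX).trans hX
  have hE_large : 4 * α < ‖TE‖ := by linarith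
  constructor
  · rw [sub_le_comm, le_div_iff₀ (by linarith)]
    linarith
  · rw [le_sub_comm, div_le_iff₀ (by linarith)]
    linarith

theorem top_eigenvector_mass_on_corruption (n : ℕ) (X E Y : Matrix (Fin n) (Fin n) ℝ)
    (hY : Y = X + E) (hXsymm : X.IsSymm) (hYsymm : Y.IsSymm)
    (α : ℝ) (hX : ‖Matrix.toEuclideanCLM (𝕜 := ℝ) X‖ ≤ α)
    (v : EuclideanSpace ℝ (Fin n)) (hv : ‖v‖ = 1) (lam : ℝ)
    (heig : Matrix.toEuclideanCLM (𝕜 := ℝ) Y v = lam • v)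
    (hlam : |lam| = ‖Matrix.toEuclideanCLM (𝕜 := ℝ) Y‖)
    (hbig : ‖Matrix.toEuclideanCLM (𝕜 := ℝ) Y‖ > 5 * α)
    (Q : Finset (Fin n)) (hQ : ∀ i j : Fin n, E i j ≠ 0 → i ∈ Q ∧ j ∈ Q)
    (vtil : EuclideanSpace ℝ (Fin n)) (hvtil : ∀ i, vtil i = if i ∈ Q then v i else 0) :
    1 - 2 * α / ‖Matrix.toEuclideanCLM (𝕜 := ℝ) E‖ ≤ ‖vtil‖ ^ 2 ∧
    (1 : ℝ) / 2 ≤ 1 - 2 * α / ‖Matrix.toEuclideanCLM (𝕜 := ℝ) E‖ :=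
  top_eigenvector_mass_on_corruption_general n X E Y hY α hX v hv lam heig hlam hbig Q hQ vtil hvtil
end

section
/- Let Y = X + E be symmetric n×n real matrices with E supported on rows and columns indexed by a set Q. If ‖Y‖_op > 5α and ‖X‖_op ≤ α, then for the top eigenvector v of Y (unit eigenvector with eigenvalue of largest magnitude), Σ_{i∈Q} v_i² ≥ 1/2. -/
theorem top_eigenvector_half_mass (n : ℕ) (X E Y : Matrix (Fin n) (Fin n) ℝ)
    (hY : Y = X + E) (hXsymm : X.IsSymm) (hYsymm : Y.IsSymm)
    (Q : Finset (Fin n)) (hQ : ∀ i j : Fin n, E i j ≠ 0 → i ∈ Q ∧ j ∈ Q)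
    (α : ℝ) (hX : ‖Matrix.toEuclideanCLM (𝕜 := ℝ) X‖ ≤ α)
    (hbig : ‖Matrix.toEuclideanCLM (𝕜 := ℝ) Y‖ > 5 * α)
    (v : EuclideanSpace ℝ (Fin n)) (hv : ‖v‖ = 1) (lam : ℝ)
    (heig : Matrix.toEuclideanCLM (𝕜 := ℝ) Y v = lam • v)
    (hlam : |lam| = ‖Matrix.toEuclideanCLM (𝕜 := ℝ) Y‖) :
    (1 : ℝ) / 2 ≤ ∑ i ∈ Q, (v i) ^ 2 := by
  have hα : 0 ≤ α := le_trans (norm_nonneg _) hX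
  -- set w := X applied to v
  set w : EuclideanSpace ℝ (Fin n) := Matrix.toEuclideanCLM (𝕜 := ℝ) X v with hw
  have hwnorm : ‖w‖ ≤ α := by
    calc ‖w‖ ≤ ‖Matrix.toEuclideanCLM (𝕜 := ℝ) X‖ * ‖v‖ :=
          (Matrix.toEuclideanCLM (𝕜 := ℝ) X).le_opNorm v
      _ ≤ α := by rw [hv, mul_one]; exact hX
  -- coordinatewise action of CLM is mulVec
  have happ : ∀ (M : Matrix (Fin n) (Fin n) ℝ) (x : EuclideanSpace ℝ (Fin n)) (i : Fin n),
      (Matrix.toEuclideanCLM (𝕜 := ℝ) M x) i = (M.mulVec ((WithLp.equiv 2 (Fin n → ℝ)) x)) i := by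
    intro M x i
    have := Matrix.ofLp_toEuclideanCLM (n := Fin n) (𝕜 := ℝ) M x
    exact congrFun this i
  -- for i ∉ Q, E row vanishes, so lam • v i = (X *ᵥ v) i = w i
  have hkey : ∀ i : Fin n, i ∉ Q → lam * v i = w i := by
    intro i hi
    have h1 : (Matrix.toEuclideanCLM (𝕜 := ℝ) Y v) i = lam * v i := by
      rw [heig]; rfl
    have h2 : (Matrix.toEuclideanCLM (𝕜 := ℝ) Y v) i = w i := by
      rw [happ Y v i, hw, happ X v i, hY]
      simp only [Matrix.add_mulVec, Pi.add_apply]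
      have : (E.mulVec ((WithLp.equiv 2 (Fin n → ℝ)) v)) i = 0 := by
        rw [Matrix.mulVec, dotProduct]
        apply Finset.sum_eq_zero
        intro j _
        rcases eq_or_ne (E i j) 0 with h | h
        · simp [h]
        · exact absurd (hQ i j h).1 hi
      rw [this, add_zero]
    rw [← h1, h2]
  -- sum of squares over complement of Q
  have hsumsq : ∑ i : Fin n, (v i) ^ 2 = 1 := by
    have := EuclideanSpace.norm_eq v
    rw [hv] at this
    have h2 : Real.sqrt (∑ i : Fin n, ‖v i‖ ^ 2) = 1 := this.symm
    have h3 : ∑ i : Fin n, ‖v i‖ ^ 2 = 1 := by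
      have h4 := Real.sq_sqrt (Finset.sum_nonneg (s := Finset.univ) fun (i : Fin n) _ => sq_nonneg ‖v i‖)
      rw [h2, one_pow] at h4
      exact h4.symm
    simpa [Real.norm_eq_abs, sq_abs] using h3
  have hwsumsq : ∑ i : Fin n, (w i) ^ 2 ≤ α ^ 2 := by
    have := EuclideanSpace.norm_eq w
    have h3 : ∑ i : Fin n, ‖w i‖ ^ 2 = ‖w‖ ^ 2 := by
      rw [this, Real.sq_sqrt (Finset.sum_nonneg fun i _ => sq_nonneg ‖w i‖)]
    have h4 : ∑ i : Fin n, (w i) ^ 2 = ‖w‖ ^ 2 := by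
      simpa [Real.norm_eq_abs, sq_abs] using h3
    rw [h4]
    exact pow_le_pow_left₀ (norm_nonneg _) hwnorm 2
  set S : ℝ := ∑ i ∈ Qᶜ, (v i) ^ 2 with hS
  have hSnn : 0 ≤ S := Finset.sum_nonneg fun i _ => sq_nonneg _
  have hsplit : ∑ i ∈ Q, (v i) ^ 2 + S = 1 := by
    rw [hS, Finset.sum_add_sum_compl]
    exact hsumsq
  -- lam^2 * S ≤ α^2
  have hlamS : lam ^ 2 * S ≤ α ^ 2 := by
    have h1 : lam ^ 2 * S = ∑ i ∈ Qᶜ, (w i) ^ 2 := by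
      rw [hS, Finset.mul_sum]
      apply Finset.sum_congr rfl
      intro i hi
      rw [← hkey i (Finset.mem_compl.mp hi)]
      ring
    rw [h1]
    calc ∑ i ∈ Qᶜ, (w i) ^ 2 ≤ ∑ i : Fin n, (w i) ^ 2 :=
          Finset.sum_le_sum_of_subset_of_nonneg (Finset.subset_univ _)
            (fun i _ _ => sq_nonneg _)
      _ ≤ α ^ 2 := hwsumsq
  have hlam2 : lam ^ 2 > 25 * α ^ 2 := by
    have h1 : |lam| > 5 * α := hlam ▸ hbig
    nlinarith [abs_nonneg lam, sq_abs lam]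
  -- conclude
  nlinarith [mul_le_mul_of_nonneg_right (le_of_lt hlam2) hSnn, sq_nonneg α]
end
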